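/- Let W be a topological space and let f : W × [0,1] → ℝ be a continuous function. Assume that for every t ∈ [0,1] there is a unique minimizer v_t ∈ W of the function x ↦ f(x,t), i.e. a unique v_t with f(v_t,t) ≤ f(y,t) for all y ∈ W. Then the graph {(v_t, t) : t ∈ [0,1]} of the map σ : [0,1] → W, σ(t) = v_t, is a closed subset of W × [0,1]. (No compactness of W is needed for this conclusion.) -/
import Mathlib

/-- Intermediate closedness claim in the proof of Lemma 2.2: if
`f : W × [0,1] → ℝ` is continuous and for every `t ∈ [0,1]` the function
`f(·,t)` has a unique minimizer `σ t`, then the graph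
`{(σ t, t) : t ∈ [0,1]}` of the selection map `σ` is closed in `W × [0,1]`.
No compactness of `W` is needed. -/
theorem closed_graph_of_unique_minimizer
    {W : Type*} [TopologicalSpace W]
    (f : W × (Set.Icc (0 : ℝ) 1) → ℝ) (hf : Continuous f)
    (σ : Set.Icc (0 : ℝ) 1 → W)
    (hmin : ∀ t : Set.Icc (0 : ℝ) 1, ∀ y : W, f (σ t, t) ≤ f (y, t))
    (huniq : ∀ t : Set.Icc (0 : ℝ) 1, ∀ v : W,
      (∀ y : W, f (v, t) ≤ f (y, t)) → v = σ t) :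
    IsClosed {p : W × (Set.Icc (0 : ℝ) 1) | p.1 = σ p.2} := by
  rw [← isOpen_compl_iff]
  have hset : {p : W × (Set.Icc (0 : ℝ) 1) | p.1 = σ p.2}ᶜ
      = ⋃ y : W, {p : W × (Set.Icc (0 : ℝ) 1) | f (y, p.2) < f p} := by
    ext p
    simp only [Set.mem_compl_iff, Set.mem_setOf_eq, Set.mem_iUnion]
    constructor
    · intro hne
      by_contra h
      push_neg at h
      exact hne (huniq p.2 p.1 (by simpa using h))
    · rintro ⟨y, hy⟩ heq
      have := hmin p.2 y
      rw [← heq] at this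
      exact absurd hy (not_lt.2 this)
  rw [hset]
  refine isOpen_iUnion fun y => isOpen_lt ?_ ?_
  · exact hf.comp (continuous_const.prodMk continuous_snd)
  · exact hf
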